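/- Let J be the Jacobian of the reduced system f_S(S,R) = λ_S S(1-(S+R)/K) - αS + ξR, f_R(S,R) = λ_R R(1-(S+R)/K) + αS - ξR evaluated at the coexistence equilibrium (S*,R*) = (ξK/(α+ξ), αK/(α+ξ)). If λ_S, λ_R > 0 and α, ξ > 0, then trace(J) = -(ξλ_S + αλ_R)/(α+ξ) - α - ξ < 0 and det(J) = ξλ_S + αλ_R > 0. -/

import Mathlib

/-!
On the line `S + R = K` the logistic factor `1 - (S + R) / K` vanishes, so at the coexistence
equilibrium only the crowding terms `-λ S / K` and the switching rates enter the Jacobian: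
`J = [[-p - α, ξ - p], [α - q, -q - ξ]]` with `p = λ_S S* / K = ξ λ_S / (α + ξ)` and
`q = λ_R R* / K = α λ_R / (α + ξ)`. Hence `tr J = -(p + q) - α - ξ` and `det J = (p + q)(α + ξ)`.
-/

/-- `f_S = switchingLogistic λ_S K α ξ S R` and `f_R = switchingLogistic λ_R K ξ α R S`. -/
noncomputable def switchingLogistic (lam K out inn x y : ℝ) : ℝ :=
  lam * x * (1 - (x + y) / K) - out * x + inn * y

theorem hasDerivAt_switchingLogistic_fst {lam K out inn x y : ℝ} (hK : K ≠ 0)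
    (hxy : x + y = K) :
    HasDerivAt (fun x' => switchingLogistic lam K out inn x' y) (-(lam * x / K) - out) x := by
  have hlogistic : HasDerivAt (fun x' => 1 - (x' + y) / K) (-(1 / K)) x := by
    simpa using (((hasDerivAt_id x).add_const y).div_const K).const_sub 1
  have h := ((((hasDerivAt_id x).const_mul lam).mul hlogistic).sub
    ((hasDerivAt_id x).const_mul out)).add_const (inn * y)
  refine h.congr_deriv ?_
  rw [hxy, div_self hK]
  simp only [id]
  ring

theorem hasDerivAt_switchingLogistic_snd (lam K out inn x y : ℝ) :
    HasDerivAt (fun y' => switchingLogistic lam K out inn x y') (inn - lam * x / K) y := by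
  have h := ((((hasDerivAt_id y).const_add x).div_const K).const_sub 1).const_mul (lam * x)
    |>.sub_const (out * x) |>.add ((hasDerivAt_id y).const_mul inn)
  refine h.congr_deriv ?_
  ring

theorem coexistence_add_eq {K alpha xi : ℝ} (h : alpha + xi ≠ 0) :
    xi * K / (alpha + xi) + alpha * K / (alpha + xi) = K := by
  field_simp
  ring

/-- Trace and determinant of the Jacobian of the reduced (S,R) kinetics at the
coexistence equilibrium: trace = -(ξλ_S+αλ_R)/(α+ξ) - α - ξ < 0 and
det = ξλ_S + αλ_R > 0. -/
theorem jacobian_trace_det (lamS lamR K alpha xi : ℝ)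
    (hlamS : 0 < lamS) (hlamR : 0 < lamR) (hK : 0 < K)
    (halpha : 0 < alpha) (hxi : 0 < xi) :
    let fS : ℝ → ℝ → ℝ := fun S R => lamS * S * (1 - (S + R) / K) - alpha * S + xi * R
    let fR : ℝ → ℝ → ℝ := fun S R => lamR * R * (1 - (S + R) / K) + alpha * S - xi * R
    let Sstar : ℝ := xi * K / (alpha + xi)
    let Rstar : ℝ := alpha * K / (alpha + xi)
    let a : ℝ := deriv (fun s => fS s Rstar) Sstar
    let b : ℝ := deriv (fun r => fS Sstar r) Rstar
    let c : ℝ := deriv (fun s => fR s Rstar) Sstar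
    let d : ℝ := deriv (fun r => fR Sstar r) Rstar
    a + d = -(xi * lamS + alpha * lamR) / (alpha + xi) - alpha - xi ∧
    a + d < 0 ∧
    a * d - b * c = xi * lamS + alpha * lamR ∧
    0 < a * d - b * c := by
  intro fS fR Sstar Rstar a b c d
  have hK0 : K ≠ 0 := hK.ne'
  have hsum : Sstar + Rstar = K := coexistence_add_eq (by positivity)
  have hfR : ∀ s r, fR s r = switchingLogistic lamR K xi alpha r s := fun s r => by
    simp only [fR, switchingLogistic]
    ring
  have ha : a = -(lamS * Sstar / K) - alpha := (hasDerivAt_switchingLogistic_fst hK0 hsum).deriv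
  have hb : b = xi - lamS * Sstar / K := (hasDerivAt_switchingLogistic_snd ..).deriv
  have hc : c = alpha - lamR * Rstar / K := by
    simpa only [c, hfR] using (hasDerivAt_switchingLogistic_snd ..).deriv
  have hd : d = -(lamR * Rstar / K) - xi := by
    simpa only [d, hfR] using
      (hasDerivAt_switchingLogistic_fst hK0 (by rw [add_comm, hsum])).deriv
  have htrace : a + d = -(xi * lamS + alpha * lamR) / (alpha + xi) - alpha - xi := by
    rw [ha, hd]
    simp only [Sstar, Rstar]
    field_simp
    ring
  have hdet : a * d - b * c = xi * lamS + alpha * lamR := by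
    rw [ha, hb, hc, hd]
    simp only [Sstar, Rstar]
    field_simp
    ring
  refine ⟨htrace, ?_, hdet, by rw [hdet]; positivity⟩
  have hpos : 0 < (xi * lamS + alpha * lamR) / (alpha + xi) := by positivity
  rw [htrace, neg_div]
  linarith
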